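/- Let A be an invertible symmetric matrix over ℚ of size m, C an invertible symmetric matrix over ℚ of size n, B ∈ ℚ^{g×m}, D ∈ ℚ^{g×n}. Then the block matrix T = [A, Bᵀ, 0, 0; B, BA⁻¹Bᵀ, -I, 0; 0, -I, DC⁻¹Dᵀ, D; 0, 0, Dᵀ, C] is invertible, and |det T| = |det A| · |det C|. -/
import Mathlib

open Matrix

/-- The block matrix `[A, Bᵀ, 0, 0; B, BA⁻¹Bᵀ, -I, 0; 0, -I, DC⁻¹Dᵀ, D; 0, 0, Dᵀ, C]`. -/
noncomputable def glueMatrix {m n g : ℕ}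
    (A : Matrix (Fin m) (Fin m) ℚ) (C : Matrix (Fin n) (Fin n) ℚ)
    (B : Matrix (Fin g) (Fin m) ℚ) (D : Matrix (Fin g) (Fin n) ℚ) :
    Matrix ((Fin m ⊕ Fin g) ⊕ (Fin g ⊕ Fin n)) ((Fin m ⊕ Fin g) ⊕ (Fin g ⊕ Fin n)) ℚ :=
  Matrix.fromBlocks
    (Matrix.fromBlocks A Bᵀ B (B * A⁻¹ * Bᵀ))
    (Matrix.fromBlocks 0 0 (-1) 0)
    (Matrix.fromBlocks 0 (-1) 0 0)
    (Matrix.fromBlocks (D * C⁻¹ * Dᵀ) D Dᵀ C)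

theorem stmt_19 (m n g : ℕ)
    (A : Matrix (Fin m) (Fin m) ℚ) (hA : A.IsSymm) (hAu : IsUnit A.det)
    (C : Matrix (Fin n) (Fin n) ℚ) (hC : C.IsSymm) (hCu : IsUnit C.det)
    (B : Matrix (Fin g) (Fin m) ℚ) (D : Matrix (Fin g) (Fin n) ℚ) :
    IsUnit (glueMatrix A C B D).det ∧
    |(glueMatrix A C B D).det| = |A.det| * |C.det| := by
  set L : Matrix ((Fin m ⊕ Fin g) ⊕ (Fin g ⊕ Fin n)) ((Fin m ⊕ Fin g) ⊕ (Fin g ⊕ Fin n)) ℚ :=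
    Matrix.fromBlocks (Matrix.fromBlocks 1 0 (-(B * A⁻¹)) 1) 0 0
      (Matrix.fromBlocks 1 (-(D * C⁻¹)) 0 1) with hL
  set R : Matrix ((Fin m ⊕ Fin g) ⊕ (Fin g ⊕ Fin n)) ((Fin m ⊕ Fin g) ⊕ (Fin g ⊕ Fin n)) ℚ :=
    Matrix.fromBlocks (Matrix.fromBlocks 1 (-(A⁻¹ * Bᵀ)) 0 1) 0 0
      (Matrix.fromBlocks 1 0 (-(C⁻¹ * Dᵀ)) 1) with hR
  set V : Matrix ((Fin m ⊕ Fin g) ⊕ (Fin g ⊕ Fin n)) ((Fin m ⊕ Fin g) ⊕ (Fin g ⊕ Fin n)) ℚ :=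
    Matrix.fromBlocks (Matrix.fromBlocks A 0 0 0) (Matrix.fromBlocks 0 0 (-1) 0)
      (Matrix.fromBlocks 0 (-1) 0 0) (Matrix.fromBlocks 0 0 0 C) with hV
  have key : L * glueMatrix A C B D * R = V := by
    simp [hL, hR, hV, glueMatrix, Matrix.fromBlocks_multiply, Matrix.mul_assoc,
      Matrix.mul_nonsing_inv_cancel_left _ _ hAu, Matrix.mul_nonsing_inv_cancel_left _ _ hCu,
      Matrix.nonsing_inv_mul_cancel_left _ _ hAu, Matrix.nonsing_inv_mul_cancel_left _ _ hCu,
      Matrix.nonsing_inv_mul _ hAu, Matrix.nonsing_inv_mul _ hCu,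
      Matrix.mul_nonsing_inv _ hAu, Matrix.mul_nonsing_inv _ hCu]
  have detL : L.det = 1 := by
    simp [hL, Matrix.det_fromBlocks_zero₂₁, Matrix.det_fromBlocks_zero₁₂]
  have detR : R.det = 1 := by
    simp [hR, Matrix.det_fromBlocks_zero₂₁, Matrix.det_fromBlocks_zero₁₂]
  have hdetTV : (glueMatrix A C B D).det = V.det := by
    have := congrArg Matrix.det key
    rwa [Matrix.det_mul, Matrix.det_mul, detL, detR, one_mul, mul_one] at this
  have hVV : V * V = Matrix.fromBlocks (Matrix.fromBlocks (A * A) 0 0 1) 0 0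
      (Matrix.fromBlocks 1 0 0 (C * C)) := by
    simp [hV, Matrix.fromBlocks_multiply, Matrix.fromBlocks_add]
  have hsq : V.det ^ 2 = (A.det * C.det) ^ 2 := by
    have := congrArg Matrix.det hVV
    rw [Matrix.det_mul] at this
    simp [Matrix.det_fromBlocks_zero₂₁] at this
    rw [sq, this]; ring
  have hne : (A.det * C.det) ≠ 0 := mul_ne_zero hAu.ne_zero hCu.ne_zero
  have habs : |V.det| = |A.det * C.det| := by
    have := abs_eq_abs.mpr (sq_eq_sq_iff_eq_or_eq_neg.mp hsq)
    exact this
  constructor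
  · rw [hdetTV]
    refine isUnit_iff_ne_zero.mpr ?_
    intro h
    rw [h] at hsq
    simp at hsq
    exact hne (pow_eq_zero_iff (n := 2) (by norm_num) |>.mp hsq.symm)
  · rw [hdetTV, habs, abs_mul]
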